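/- A numerical two-point flux f^num is PEP if and only if, for every N ≥ 4, every velocity v ∈ ℝ, every pressure p > 0, and every N-periodic family of densities ρ_i > 0 (i ∈ ℤ/N) with states u_i = (ρ_i, v, p), the finite-volume flux differences satisfy for every i: f^num_{ρv}(u_i, u_{i+1}) − f^num_{ρv}(u_{i−1}, u_i) = v ( f^num_ρ(u_i, u_{i+1}) − f^num_ρ(u_{i−1}, u_i) ) and f^num_{ρe}(u_i, u_{i+1}) − f^num_{ρe}(u_{i−1}, u_i) = (v²/2) ( f^num_ρ(u_i, u_{i+1}) − f^num_ρ(u_{i−1}, u_i) ); these identities state exactly that the semidiscrete finite-volume method ∂_t u_i = −(1/Δx)( f^num(u_i, u_{i+1}) − f^num(u_{i−1}, u_i) ) keeps the velocity and the pressure constant in time (∂_t v_i = 0 and ∂_t p_i = 0). -/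
import Mathlib


noncomputable section
open Real

/-- A state `u = (ρ, v, p)` of the 1D compressible Euler equations:
density `u.1`, velocity `u.2.1`, pressure `u.2.2`. -/
abbrev EulerState := ℝ × ℝ × ℝ

/-- Pressure equilibrium preservation (PEP): at any pressure equilibrium
`v₋ = v₊ = v`, `p₋ = p₊ = p` the momentum and energy fluxes are
`v f^num_ρ + c₁(p,v)` and `(v²/2) f^num_ρ + c₂(p,v)` for functions `c₁, c₂` of `(p, v)` only. -/
def IsPEP (f : EulerState → EulerState → EulerState) : Prop :=
  ∃ c₁ c₂ : ℝ → ℝ → ℝ, ∀ ρm ρp v p : ℝ, 0 < ρm → 0 < ρp → 0 < p →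
    (f (ρm, v, p) (ρp, v, p)).2.1 = v * (f (ρm, v, p) (ρp, v, p)).1 + c₁ p v ∧
    (f (ρm, v, p) (ρp, v, p)).2.2 = (v^2/2) * (f (ρm, v, p) (ρp, v, p)).1 + c₂ p v

/-- a two-point flux is PEP if and only if, for every periodic
finite-volume configuration (with `N ≥ 4` cells) in pressure equilibrium, the
flux differences of the momentum (resp. energy) equation equal `v` (resp. `v²/2`)
times the flux difference of the density equation; i.e. the semidiscrete
finite-volume method keeps velocity and pressure constant in time. -/
theorem pep_iff_finite_volume_pressure_equilibrium
    (γ : ℝ) (hγ : 1 < γ) (f : EulerState → EulerState → EulerState) :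
    IsPEP f ↔
    ∀ (n : ℕ), 4 ≤ n → ∀ (v p : ℝ), 0 < p → ∀ (ρ : ZMod n → ℝ), (∀ i, 0 < ρ i) →
      ∀ i : ZMod n,
        ((f (ρ i, v, p) (ρ (i+1), v, p)).2.1 - (f (ρ (i-1), v, p) (ρ i, v, p)).2.1
          = v * ((f (ρ i, v, p) (ρ (i+1), v, p)).1 - (f (ρ (i-1), v, p) (ρ i, v, p)).1))
        ∧
        ((f (ρ i, v, p) (ρ (i+1), v, p)).2.2 - (f (ρ (i-1), v, p) (ρ i, v, p)).2.2
          = (v^2/2) * ((f (ρ i, v, p) (ρ (i+1), v, p)).1 - (f (ρ (i-1), v, p) (ρ i, v, p)).1)) := by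
  constructor
  · rintro ⟨c₁, c₂, hc⟩ n hn v p hp ρ hρ i
    obtain ⟨h1a, h1b⟩ := hc (ρ i) (ρ (i+1)) v p (hρ i) (hρ (i+1)) hp
    obtain ⟨h2a, h2b⟩ := hc (ρ (i-1)) (ρ i) v p (hρ (i-1)) (hρ i) hp
    constructor
    · rw [h1a, h2a]; ring
    · rw [h1b, h2b]; ring
  · intro h
    refine ⟨fun p v => (f (1,v,p) (1,v,p)).2.1 - v * (f (1,v,p) (1,v,p)).1,
            fun p v => (f (1,v,p) (1,v,p)).2.2 - (v^2/2) * (f (1,v,p) (1,v,p)).1, ?_⟩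
    intro ρm ρp v p hm hpp hp
    set ρ : ZMod 4 → ℝ := fun i => if i = 0 then ρm else if i = 1 then ρp else 1 with hρdef
    have hρpos : ∀ i, 0 < ρ i := by
      intro i
      simp only [ρ]
      split
      · exact hm
      · split
        · exact hpp
        · norm_num
    have H := h 4 le_rfl v p hp ρ hρpos
    have h1 := H 1
    have h2 := H 2
    have e0 : ρ (1 - 1 : ZMod 4) = ρm := by
      rw [show (1 - 1 : ZMod 4) = 0 from by decide]
      simp only [ρ, if_pos rfl]
    have e1 : ρ (1 : ZMod 4) = ρp := by
      simp only [ρ, if_neg (by decide : (1 : ZMod 4) ≠ 0)]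
      simp
    have e2 : ρ (1 + 1 : ZMod 4) = 1 := by
      rw [show (1 + 1 : ZMod 4) = 2 from by decide]
      simp only [ρ, if_neg (by decide : (2 : ZMod 4) ≠ 0),
        if_neg (by decide : (2 : ZMod 4) ≠ 1)]
    have e2' : ρ (2 - 1 : ZMod 4) = ρp := by
      rw [show (2 - 1 : ZMod 4) = 1 from by decide]; exact e1
    have e3 : ρ (2 : ZMod 4) = 1 := by
      simp only [ρ, if_neg (by decide : (2 : ZMod 4) ≠ 0),
        if_neg (by decide : (2 : ZMod 4) ≠ 1)]
    have e4 : ρ (2 + 1 : ZMod 4) = 1 := by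
      rw [show (2 + 1 : ZMod 4) = 3 from by decide]
      simp only [ρ, if_neg (by decide : (3 : ZMod 4) ≠ 0),
        if_neg (by decide : (3 : ZMod 4) ≠ 1)]
    rw [e0, e1, e2] at h1
    rw [e2', e3, e4] at h2
    obtain ⟨h1a, h1b⟩ := h1
    obtain ⟨h2a, h2b⟩ := h2
    constructor
    · simp only []
      linear_combination -(h1a + h2a)
    · simp only []
      linear_combination -(h1b + h2b)
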